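/- arXiv:2201.12752 — 2 statements merged into one kernel-verified Lean document; each statement's English description precedes it below -/
import Mathlib

section
/- Let M_{0,1}, M_{0,0} be {0,1}-valued random variables and Y_{0,1}, Y_{0,0} integrable random variables with P(M_{0,1} > M_{0,0}) ≠ P(M_{0,1} < M_{0,0}). Then E[Y_{0,M_{0,1}} − Y_{0,M_{0,0}}] / E[M_{0,1} − M_{0,0}] = ( E[(Y_{0,1} − Y_{0,0})·1{M_{0,1} > M_{0,0}}] − E[(Y_{0,1} − Y_{0,0})·1{M_{0,1} < M_{0,0}}] ) / ( P(M_{0,1} > M_{0,0}) − P(M_{0,1} < M_{0,0}) ), so the Wald-type IV coefficient β₁^{IV} is a weighted difference of the average effects Y_{0,1} − Y_{0,0} for those with M_{0,1} > M_{0,0} and those with M_{0,1} < M_{0,0}. -/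
/-!
Pointwise, `Y_{M₁} - Y_{M₀} = (Y_1 - Y_0) (1{M₀ < M₁} - 1{M₁ < M₀})` for binary `M₀, M₁`.
Integrating gives the numerator, and the same identity for `Y_m = m` gives the denominator
`P(M₀ < M₁) - P(M₁ < M₀)`.
-/

open MeasureTheory ProbabilityTheory

/-- Conditional mean `E[W | A] = E[W·1_A] / P(A)` (set integral divided by probability). -/
noncomputable def condMean {Ω : Type*} [MeasurableSpace Ω] (P : Measure Ω)
    (W : Ω → ℝ) (A : Set Ω) : ℝ :=
  (∫ ω in A, W ω ∂P) / (P A).toReal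

/-- A `{0,1}`-valued (Bool-coded) random variable, viewed as a real number. -/
noncomputable def bR (b : Bool) : ℝ := if b then 1 else 0

theorem Bool.apply_sub_apply_eq_ite {E : Type*} [AddCommGroup E] (f : Bool → E) (a b : Bool) :
    f b - f a
      = (if a < b then f true - f false else 0) - (if b < a then f true - f false else 0) := by
  cases a <;> cases b <;> simp [Bool.lt_iff]

theorem measurableSet_lt_of_countable {Ω α : Type*} [MeasurableSpace Ω] [MeasurableSpace α]
    [Countable α] [MeasurableSingletonClass α] [LT α] {f g : Ω → α} (hf : Measurable f)
    (hg : Measurable g) : MeasurableSet {ω | f ω < g ω} :=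
  hf.prodMk hg (Set.to_countable {p : α × α | p.1 < p.2}).measurableSet

theorem integral_comp_bool_sub {Ω E : Type*} [MeasurableSpace Ω] [NormedAddCommGroup E]
    [NormedSpace ℝ E] {P : Measure Ω} {M₁ M₀ : Ω → Bool} (h₁ : Measurable M₁)
    (h₀ : Measurable M₀) {Y : Bool → Ω → E} (hY : ∀ m, Integrable (Y m) P) :
    ∫ ω, (Y (M₁ ω) ω - Y (M₀ ω) ω) ∂P
      = (∫ ω in {ω | M₀ ω < M₁ ω}, (Y true ω - Y false ω) ∂P)
        - ∫ ω in {ω | M₁ ω < M₀ ω}, (Y true ω - Y false ω) ∂P := by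
  have hA := measurableSet_lt_of_countable h₀ h₁
  have hB := measurableSet_lt_of_countable h₁ h₀
  have hg : Integrable (fun ω => Y true ω - Y false ω) P := (hY true).sub (hY false)
  rw [← integral_indicator hA, ← integral_indicator hB,
    ← integral_sub (hg.indicator hA) (hg.indicator hB)]
  congr 1 with ω
  simp only [Set.indicator_apply, Set.mem_ofPred_eq]
  exact Bool.apply_sub_apply_eq_ite (fun m => Y m ω) (M₀ ω) (M₁ ω)

theorem stmt_6_general {Ω : Type*} [MeasurableSpace Ω] (P : Measure Ω) [IsProbabilityMeasure P]
    (M01 M00 : Ω → Bool) (Y0 : Bool → Ω → ℝ)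
    (hM01 : Measurable M01) (hM00 : Measurable M00)
    (hY : ∀ m, Integrable (Y0 m) P) :
    (∫ ω, (Y0 (M01 ω) ω - Y0 (M00 ω) ω) ∂P) / (∫ ω, (bR (M01 ω) - bR (M00 ω)) ∂P)
      = ((∫ ω in {ω | M00 ω < M01 ω}, (Y0 true ω - Y0 false ω) ∂P)
          - (∫ ω in {ω | M01 ω < M00 ω}, (Y0 true ω - Y0 false ω) ∂P))
        / ((P {ω | M00 ω < M01 ω}).toReal - (P {ω | M01 ω < M00 ω}).toReal) := by
  have hden := integral_comp_bool_sub (P := P) hM01 hM00 (Y := fun m _ => bR m)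
    fun m => integrable_const (bR m)
  rw [integral_comp_bool_sub hM01 hM00 hY, hden]
  simp [bR, Measure.real]

/-- the Wald-type IV coefficient `β₁^{IV}` is a weighted difference of the
average effects `Y_{0,1} - Y_{0,0}` over those with `M_{0,1} > M_{0,0}` and those with
`M_{0,1} < M_{0,0}`. -/
theorem stmt_6 {Ω : Type*} [MeasurableSpace Ω] (P : Measure Ω) [IsProbabilityMeasure P]
    (M01 M00 : Ω → Bool) (Y0 : Bool → Ω → ℝ)
    (hM01 : Measurable M01) (hM00 : Measurable M00)
    (hY : ∀ m, Integrable (Y0 m) P)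
    (hne : (P {ω | M00 ω < M01 ω}).toReal ≠ (P {ω | M01 ω < M00 ω}).toReal) :
    (∫ ω, (Y0 (M01 ω) ω - Y0 (M00 ω) ω) ∂P) / (∫ ω, (bR (M01 ω) - bR (M00 ω)) ∂P)
      = ((∫ ω in {ω | M00 ω < M01 ω}, (Y0 true ω - Y0 false ω) ∂P)
          - (∫ ω in {ω | M01 ω < M00 ω}, (Y0 true ω - Y0 false ω) ∂P))
        / ((P {ω | M00 ω < M01 ω}).toReal - (P {ω | M01 ω < M00 ω}).toReal) :=
  stmt_6_general P M01 M00 Y0 hM01 hM00 hY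
end

section
/- Let Z be a {0,1}-valued random variable and suppose the family consisting of the {0,1}-valued potential mediators (M_{d,z})_{d,z∈{0,1}} and the integrable potential outcomes Y_{0,0}, Y_{0,1} is independent of Z. Assume P(M_{1,z} ≥ M_{0,z}) = 1 for z = 0,1 (weak monotonicity of the mediator in the treatment), P(M_{0,1} ≥ M_{0,0}) = 1 (weak monotonicity of the mediator in the instrument under the control state), and P(M_{0,1} > M_{0,0}) > 0. Then the IV estimand of the natural indirect effect satisfies ( E[Y_{0,M_{0,1}} − Y_{0,M_{0,0}}] / E[M_{0,1} − M_{0,0}] ) · E[M_{1,Z} − M_{0,Z}] = E[Y_{0,1} − Y_{0,0} | M_{0,1} > M_{0,0}] · Σ_{z∈{0,1}} P(M_{1,z} > M_{0,z})·P(Z=z); that is, NIE_0^{IV} equals the average mediator effect among instrument-compliers in the untreated state, times a positive weight, and in general differs from NIE_0 = Σ_z E[Y_{0,1} − Y_{0,0} | M_{1,z} > M_{0,z}]·P(M_{1,z} > M_{0,z})·P(Z=z). -/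
open MeasureTheory ProbabilityTheory

/-!
Monotonicity in the instrument gives `M₀₀ ≤ M₀₁` a.s., so `Y₀(M₀₁) - Y₀(M₀₀)` vanishes off the
complier set `{M₀₀ < M₀₁}` and equals `Y₀₁ - Y₀₀` on it; the same computation with `bR` in place
of `Y₀` shows that the denominator is `P(M₀₀ < M₀₁)`, so the Wald ratio is the complier mean.
Splitting `E[M_{1,Z} - M_{0,Z}]` over the values of `Z`, independence factorises each term as
`P(M_{0,z} < M_{1,z}) P(Z = z)`.
-/

lemma Bool.apply_sub_apply_eq_ite_lt {R : Type*} [AddGroup R] (f : Bool → R) {a b : Bool}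
    (hab : a ≤ b) : f b - f a = if a < b then f true - f false else 0 := by
  cases a <;> cases b <;> first | simp | exact absurd hab (by decide)

lemma measurable_bR : Measurable bR := measurable_of_countable _

section

variable {Ω : Type*} [MeasurableSpace Ω] {P : Measure Ω}

lemma measurableSet_setOf_bool_lt {A B : Ω → Bool} (hA : Measurable A) (hB : Measurable B) :
    MeasurableSet {ω | A ω < B ω} :=
  hA.prodMk hB (MeasurableSet.of_discrete (s := {p : Bool × Bool | p.1 < p.2}))

lemma ae_le_of_measure_setOf_le_eq_one [IsProbabilityMeasure P] {A B : Ω → Bool}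
    (hA : Measurable A) (hB : Measurable B) (h : P {ω | A ω ≤ B ω} = 1) :
    ∀ᵐ ω ∂P, A ω ≤ B ω :=
  (ae_iff_prob_eq_one
    ((measurable_of_countable fun p : Bool × Bool => p.1 ≤ p.2).comp (hA.prodMk hB))).2 h

lemma integral_apply_sub_apply_eq_setIntegral {A B : Ω → Bool} (hA : Measurable A)
    (hB : Measurable B) (hAB : ∀ᵐ ω ∂P, A ω ≤ B ω) (Y : Bool → Ω → ℝ) :
    ∫ ω, (Y (B ω) ω - Y (A ω) ω) ∂P = ∫ ω in {ω | A ω < B ω}, (Y true ω - Y false ω) ∂P := by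
  rw [← integral_indicator (measurableSet_setOf_bool_lt hA hB)]
  refine integral_congr_ae (hAB.mono fun ω hω => ?_)
  simp only [Set.indicator_apply, Set.mem_ofPred_eq]
  exact Bool.apply_sub_apply_eq_ite_lt (fun b => Y b ω) hω

lemma integral_bR_sub_bR_eq_measureReal {A B : Ω → Bool} (hA : Measurable A)
    (hB : Measurable B) (hAB : ∀ᵐ ω ∂P, A ω ≤ B ω) :
    ∫ ω, (bR (B ω) - bR (A ω)) ∂P = P.real {ω | A ω < B ω} := by
  rw [integral_apply_sub_apply_eq_setIntegral hA hB hAB fun b _ => bR b]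
  simp [bR]

lemma integrable_bR_comp [IsFiniteMeasure P] {A : Ω → Bool} (hA : Measurable A) :
    Integrable (fun ω => bR (A ω)) P :=
  Integrable.of_bound (measurable_bR.comp hA).aestronglyMeasurable 1
    (ae_of_all _ fun ω => by cases A ω <;> simp [bR])

lemma indepFun_of_measurable_of_indep {β γ : Type*} [MeasurableSpace β] [MeasurableSpace γ]
    {m : MeasurableSpace Ω} {X : Ω → β} {Z : Ω → γ} (hX : Measurable[m] X)
    (h : Indep m (MeasurableSpace.comap Z inferInstance) P) : IndepFun X Z P :=
  (IndepFun_iff_Indep X Z P).2 (indep_of_indep_of_le_left h (measurable_iff_comap_le.1 hX))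

lemma integral_apply_eq_sum_mul_measureReal {ι : Type*} [Fintype ι]
    [MeasurableSpace ι] [MeasurableSingletonClass ι] {Z : Ω → ι} (hZ : Measurable Z)
    {X : ι → Ω → ℝ} (hX : ∀ i, Integrable (X i) P) (hXZ : ∀ i, IndepFun (X i) Z P) :
    ∫ ω, X (Z ω) ω ∂P = ∑ i, (∫ ω, X i ω ∂P) * P.real {ω | Z ω = i} := by
  have hind : ∀ i, Measurable (({i} : Set ι).indicator (1 : ι → ℝ)) := fun i =>
    measurable_one.indicator (measurableSet_singleton i)
  have hsplit : ∀ ω, X (Z ω) ω = ∑ i, X i ω * {ω | Z ω = i}.indicator 1 ω := fun ω => by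
    classical
    simp [Set.indicator_apply]
  have hterm : ∀ i, ∫ ω, X i ω * {ω | Z ω = i}.indicator 1 ω ∂P
      = (∫ ω, X i ω ∂P) * P.real {ω | Z ω = i} := fun i => by
    rw [← integral_indicator_one (s := {ω | Z ω = i}) (hZ (measurableSet_singleton i))]
    exact ((hXZ i).comp measurable_id (hind i)).integral_fun_mul_eq_mul_integral
      (hX i).aestronglyMeasurable ((hind i).comp hZ).aestronglyMeasurable
  simp_rw [hsplit]
  rw [integral_finsetSum _ fun i _ => ?_]
  · exact Finset.sum_congr rfl fun i _ => hterm i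
  · exact (hX i).mul_bdd (c := 1) ((hind i).comp hZ).aestronglyMeasurable
      (ae_of_all _ fun ω => (norm_indicator_le_norm_self _ _).trans (by simp))

end

theorem stmt_18_general {Ω : Type*} [MeasurableSpace Ω] (P : Measure Ω) [IsProbabilityMeasure P]
    (Z : Ω → Bool) (M : Bool → Bool → Ω → Bool) (Y0 : Bool → Ω → ℝ)
    (hZ : Measurable Z) (hM : ∀ d z, Measurable (M d z))
    (hIndep : Indep
      ((⨆ (d : Bool) (z : Bool), MeasurableSpace.comap (M d z) inferInstance)
        ⊔ (⨆ (m : Bool), MeasurableSpace.comap (Y0 m) inferInstance))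
      (MeasurableSpace.comap Z inferInstance) P)
    (hmonoD : ∀ z : Bool, P {ω | M false z ω ≤ M true z ω} = 1)
    (hmonoZ : P {ω | M false false ω ≤ M false true ω} = 1) :
    ((∫ ω, (Y0 (M false true ω) ω - Y0 (M false false ω) ω) ∂P)
        / (∫ ω, (bR (M false true ω) - bR (M false false ω)) ∂P))
      * (∫ ω, (bR (M true (Z ω) ω) - bR (M false (Z ω) ω)) ∂P)
      = condMean P (fun ω => Y0 true ω - Y0 false ω) {ω | M false false ω < M false true ω}
        * ∑ z : Bool,
            (P {ω | M false z ω < M true z ω}).toReal * (P {ω | Z ω = z}).toReal := by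
  have hleZ := ae_le_of_measure_setOf_le_eq_one (hM false false) (hM false true) hmonoZ
  have hleD := fun z => ae_le_of_measure_setOf_le_eq_one (hM false z) (hM true z) (hmonoD z)
  have hM_sup : ∀ d z, Measurable[(⨆ (d : Bool) (z : Bool),
      MeasurableSpace.comap (M d z) inferInstance)
        ⊔ (⨆ (m : Bool), MeasurableSpace.comap (Y0 m) inferInstance)] (M d z) := fun d z =>
    measurable_iff_comap_le.2 (le_sup_of_le_left
      (le_iSup₂ (f := fun d z => MeasurableSpace.comap (M d z) inferInstance) d z))
  have hindep : ∀ z, IndepFun (fun ω => bR (M true z ω) - bR (M false z ω)) Z P := fun z =>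
    indepFun_of_measurable_of_indep
      ((measurable_bR.comp (hM_sup true z)).sub (measurable_bR.comp (hM_sup false z))) hIndep
  have hint : ∀ z, Integrable (fun ω => bR (M true z ω) - bR (M false z ω)) P := fun z =>
    (integrable_bR_comp (hM true z)).sub (integrable_bR_comp (hM false z))
  rw [integral_apply_sub_apply_eq_setIntegral (hM false false) (hM false true) hleZ,
    integral_bR_sub_bR_eq_measureReal (hM false false) (hM false true) hleZ,
    integral_apply_eq_sum_mul_measureReal hZ
      (X := fun z ω => bR (M true z ω) - bR (M false z ω)) hint hindep]
  simp only [integral_bR_sub_bR_eq_measureReal (hM false _) (hM true _) (hleD _), condMean,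
    measureReal_def]

/-- under independence of the potential variables from `Z`, weak monotonicity
of the mediator in the treatment and in the instrument (in the control state), with
`P(M_{0,1} > M_{0,0}) > 0`, the IV estimand `NIE_0^{IV}` equals the average mediator effect
among instrument-compliers in the untreated state times the positive weight
`Σ_z P(M_{1,z} > M_{0,z})·P(Z=z)`. -/
theorem stmt_18 {Ω : Type*} [MeasurableSpace Ω] (P : Measure Ω) [IsProbabilityMeasure P]
    (Z : Ω → Bool) (M : Bool → Bool → Ω → Bool) (Y0 : Bool → Ω → ℝ)
    (hZ : Measurable Z) (hM : ∀ d z, Measurable (M d z))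
    (hY : ∀ m, Integrable (Y0 m) P)
    (hIndep : Indep
      ((⨆ (d : Bool) (z : Bool), MeasurableSpace.comap (M d z) inferInstance)
        ⊔ (⨆ (m : Bool), MeasurableSpace.comap (Y0 m) inferInstance))
      (MeasurableSpace.comap Z inferInstance) P)
    (hmonoD : ∀ z : Bool, P {ω | M false z ω ≤ M true z ω} = 1)
    (hmonoZ : P {ω | M false false ω ≤ M false true ω} = 1)
    (hcompl : 0 < (P {ω | M false false ω < M false true ω}).toReal) :
    ((∫ ω, (Y0 (M false true ω) ω - Y0 (M false false ω) ω) ∂P)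
        / (∫ ω, (bR (M false true ω) - bR (M false false ω)) ∂P))
      * (∫ ω, (bR (M true (Z ω) ω) - bR (M false (Z ω) ω)) ∂P)
      = condMean P (fun ω => Y0 true ω - Y0 false ω) {ω | M false false ω < M false true ω}
        * ∑ z : Bool,
            (P {ω | M false z ω < M true z ω}).toReal * (P {ω | Z ω = z}).toReal :=
  stmt_18_general P Z M Y0 hZ hM hIndep hmonoD hmonoZ
end
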